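/- arXiv:0801.3697 — 6 statements merged into one kernel-verified Lean document; each statement's English description precedes it below -/
import Mathlib

section
/- In every valid Septoku board, the values of the seven circle-center cells 6, 8, 17, 19, 21, 30, 32 are pairwise distinct (equivalently, all seven symbols appear among the circle centers). -/
/-- Cell `n` (numbered 1 through 37) of the Septoku board, as an element of `Fin 37`. -/
def cell (n : ℕ) : Fin 37 := ⟨(n - 1) % 37, Nat.mod_lt _ (by norm_num)⟩

/-- The set of cells with the given (1-based) numbers. -/
def cells (l : List ℕ) : Finset (Fin 37) := (l.map cell).toFinset

/-- The 21 rows of the Septoku board (7 horizontal and 7 in each diagonal direction). -/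
def septokuRows : List (Finset (Fin 37)) :=
  [cells [1,2,3,4], cells [5,6,7,8,9], cells [10,11,12,13,14,15],
   cells [16,17,18,19,20,21,22], cells [23,24,25,26,27,28],
   cells [29,30,31,32,33], cells [34,35,36,37],
   cells [1,5,10,16], cells [2,6,11,17,23], cells [3,7,12,18,24,29],
   cells [4,8,13,19,25,30,34], cells [9,14,20,26,31,35],
   cells [15,21,27,32,36], cells [22,28,33,37],
   cells [4,9,15,22], cells [3,8,14,21,28], cells [2,7,13,20,27,33],
   cells [1,6,12,19,26,32,37], cells [5,11,18,25,31,36],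
   cells [10,17,24,30,35], cells [16,23,29,34]]

/-- The 7 circular regions of the Septoku board (centered at cells 6,8,17,19,21,30,32). -/
def septokuCircles : List (Finset (Fin 37)) :=
  [cells [1,2,5,6,7,11,12], cells [3,4,7,8,9,13,14],
   cells [10,11,16,17,18,23,24], cells [12,13,18,19,20,25,26],
   cells [14,15,20,21,22,27,28], cells [24,25,29,30,31,34,35],
   cells [26,27,31,32,33,36,37]]

/-- A valid Septoku board: a function from the 37 cells to the 7 symbols that is
injective on each of the 21 rows and attains all seven symbols on each circle. -/
def IsSeptoku (f : Fin 37 → Fin 7) : Prop :=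
  (∀ R ∈ septokuRows, Set.InjOn f ↑R) ∧
  (∀ C ∈ septokuCircles, ∀ v : Fin 7, ∃ x ∈ C, f x = v)

/-!
A circle has seven cells and carries all seven symbols, so a valid board is injective on circles
as well as on rows. Two centers sharing a row therefore differ. The only pairs of centers that do
not are those at distance two on the hexagon 6, 8, 21, 32, 30, 17 of outer centers; the
60° rotation of the board preserves validity and permutes these pairs cyclically, so it suffices
to separate cells 6 and 21, which a short chase of where their common symbol could sit in the
neighbouring circles does.
-/

def Peers (x y : Fin 37) : Prop :=
  x ≠ y ∧ ∃ R ∈ septokuRows ++ septokuCircles, x ∈ R ∧ y ∈ R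

instance : DecidableRel Peers := fun _ _ => by unfold Peers; infer_instance

def candidates (C S : Finset (Fin 37)) : Finset (Fin 37) :=
  C.filter fun x => ∀ s ∈ S, ¬ Peers x s

/-- The rotation of the board by 60°, sending cell `n` to the cell named by the `n`-th entry. -/
def rot (x : Fin 37) : Fin 37 :=
  cell ([4, 9, 15, 22, 3, 8, 14, 21, 28, 2, 7, 13, 20, 27, 33, 1, 6, 12, 19, 26, 32, 37,
    5, 11, 18, 25, 31, 36, 10, 17, 24, 30, 35, 16, 23, 29, 34].getD x 0)

set_option maxRecDepth 10000 in
theorem rot_injective : Function.Injective rot := by decide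

theorem image_rot_mem_septokuRows : ∀ R ∈ septokuRows, R.image rot ∈ septokuRows := by
  intro R hR
  fin_cases hR <;> decide

theorem image_rot_mem_septokuCircles : ∀ C ∈ septokuCircles, C.image rot ∈ septokuCircles := by
  intro C hC
  fin_cases hC <;> decide

theorem card_eq_seven_of_mem_septokuCircles : ∀ C ∈ septokuCircles, C.card = 7 := by
  intro C hC
  fin_cases hC <;> decide

namespace IsSeptoku

variable {f : Fin 37 → Fin 7}

theorem injOn_circle (hf : IsSeptoku f) {C : Finset (Fin 37)} (hC : C ∈ septokuCircles) :
    Set.InjOn f C := by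
  refine Finset.injOn_of_surjOn_of_card_le (t := Finset.univ) f (fun _ _ => Finset.mem_univ _) (fun v _ => ?_) (by simp [card_eq_seven_of_mem_septokuCircles C hC])
  obtain ⟨x, hx, rfl⟩ := hf.2 C hC v
  exact ⟨x, hx, rfl⟩

theorem apply_ne_of_peers (hf : IsSeptoku f) {x y : Fin 37} (h : Peers x y) : f x ≠ f y := by
  obtain ⟨hne, R, hR, hx, hy⟩ := h
  have hinj : Set.InjOn f R := by
    rcases List.mem_append.1 hR with hR | hR
    exacts [hf.1 R hR, hf.injOn_circle hR]
  exact fun hxy => hne (hinj hx hy hxy)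

theorem exists_mem_of_candidates_subset (hf : IsSeptoku f) {C S T : Finset (Fin 37)} {v : Fin 7}
    (hC : C ∈ septokuCircles) (hS : ∀ s ∈ S, f s = v) (hT : candidates C S ⊆ T) :
    ∃ x ∈ T, f x = v := by
  obtain ⟨x, hx, hxv⟩ := hf.2 C hC v
  refine ⟨x, hT (Finset.mem_filter.2 ⟨hx, fun s hs hxs => ?_⟩), hxv⟩
  exact hf.apply_ne_of_peers hxs (hxv.trans (hS s hs).symm)

theorem comp {σ : Fin 37 → Fin 37} (hf : IsSeptoku f) (hσ : Function.Injective σ)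
    (hrows : ∀ R ∈ septokuRows, R.image σ ∈ septokuRows)
    (hcircles : ∀ C ∈ septokuCircles, C.image σ ∈ septokuCircles) : IsSeptoku (f ∘ σ) := by
  refine ⟨fun R hR => ?_, fun C hC v => ?_⟩
  · exact (hf.1 _ (hrows R hR)).comp hσ.injOn (fun x hx => Finset.mem_image_of_mem σ hx)
  · obtain ⟨y, hy, hyv⟩ := hf.2 _ (hcircles C hC) v
    obtain ⟨x, hx, rfl⟩ := Finset.mem_image.1 hy
    exact ⟨x, hx, hyv⟩

theorem comp_rot_iterate (hf : IsSeptoku f) (k : ℕ) : IsSeptoku (f ∘ rot^[k]) := by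
  induction k with
  | zero => exact hf
  | succ k ih =>
    rw [Function.iterate_succ, ← Function.comp_assoc]
    exact ih.comp rot_injective image_rot_mem_septokuRows image_rot_mem_septokuCircles

/-- A symbol shared by the centers 6 and 21 must sit at 13 or 25 in the circle around 19. At 25
it has no room in the circle around 8; at 13 it is forced to 24 in the circle around 17 and then
has no room in the circle around 32. -/
theorem apply_six_ne_apply_twentyOne (hf : IsSeptoku f) : f (cell 6) ≠ f (cell 21) := by
  intro h
  obtain ⟨x, hx, hxv⟩ := hf.exists_mem_of_candidates_subset (v := f (cell 21))
    (C := cells [12, 13, 18, 19, 20, 25, 26]) (S := {cell 6, cell 21}) (T := {cell 13, cell 25})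
    (by decide) (by simp [h]) (by decide)
  simp only [Finset.mem_insert, Finset.mem_singleton] at hx
  rcases hx with rfl | rfl
  · obtain ⟨y, hy, hyv⟩ := hf.exists_mem_of_candidates_subset (v := f (cell 21))
      (C := cells [10, 11, 16, 17, 18, 23, 24]) (S := {cell 6, cell 21, cell 13}) (T := {cell 24})
      (by decide) (by simp [h, hxv]) (by decide)
    rw [Finset.mem_singleton] at hy
    subst y
    obtain ⟨z, hz, -⟩ := hf.exists_mem_of_candidates_subset (v := f (cell 21))
      (C := cells [26, 27, 31, 32, 33, 36, 37]) (S := {cell 6, cell 21, cell 13, cell 24})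
      (T := ∅) (by decide) (by simp [h, hxv, hyv]) (by decide)
    exact Finset.notMem_empty z hz
  · obtain ⟨y, hy, -⟩ := hf.exists_mem_of_candidates_subset (v := f (cell 21))
      (C := cells [3, 4, 7, 8, 9, 13, 14]) (S := {cell 6, cell 21, cell 25}) (T := ∅)
      (by decide) (by simp [h, hxv]) (by decide)
    exact Finset.notMem_empty y hy

theorem apply_ne_of_mem_centers (hf : IsSeptoku f) {a b : ℕ} (ha : a ∈ [6, 8, 17, 19, 21, 30, 32])
    (hb : b ∈ [6, 8, 17, 19, 21, 30, 32]) (hab : a ≠ b) : f (cell a) ≠ f (cell b) := by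
  have hpairs : ∀ a ∈ [6, 8, 17, 19, 21, 30, 32], ∀ b ∈ [6, 8, 17, 19, 21, 30, 32], a ≠ b →
      Peers (cell a) (cell b) ∨ ∃ k : Fin 6,
        (cell a = rot^[k] (cell 6) ∧ cell b = rot^[k] (cell 21)) ∨
          (cell b = rot^[k] (cell 6) ∧ cell a = rot^[k] (cell 21)) := by
    decide
  rcases hpairs a ha b hb hab with hp | ⟨k, ⟨ha, hb⟩ | ⟨hb, ha⟩⟩
  · exact hf.apply_ne_of_peers hp
  · rw [ha, hb]
    exact (hf.comp_rot_iterate k).apply_six_ne_apply_twentyOne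
  · rw [ha, hb]
    exact (hf.comp_rot_iterate k).apply_six_ne_apply_twentyOne.symm

end IsSeptoku

/-- In every valid Septoku board, the values of the seven circle-center cells
6, 8, 17, 19, 21, 30, 32 are pairwise distinct. -/
theorem septoku_circle_centers_distinct (f : Fin 37 → Fin 7) (hf : IsSeptoku f) :
    (([6, 8, 17, 19, 21, 30, 32] : List ℕ).map (fun n => f (cell n))).Pairwise (· ≠ ·) :=
  List.pairwise_map.2 <| List.Nodup.pairwise_of_forall_ne (by decide) fun _ ha _ hb hab =>
    hf.apply_ne_of_mem_centers ha hb hab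
end

section
/- In every valid Septoku board, the values of the six corner cells 1, 4, 16, 22, 34, 37 together with the central cell 19 are pairwise distinct (equivalently, all seven symbols appear among the six corners and the center). -/
/-!
A valid board is a proper 7-colouring of the graph joining two cells that share a row or a
circle: a circle has seven cells, so attaining all seven symbols on it means being injective
on it. Permuting the symbols, we may assume that the circle around cell 6 carries `0, …, 6`.
A kernel-checked backtracking search through the remaining 30 cells then shows that every such
colouring gives the six corners and the centre distinct colours.
-/

theorem IsSeptoku.injOn_of_mem_circles {f : Fin 37 → Fin 7} (hf : IsSeptoku f)
    {C : Finset (Fin 37)} (hC : C ∈ septokuCircles) : Set.InjOn f C := by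
  have hcard : ∀ C ∈ septokuCircles, C.card = 7 := by
    simp only [septokuCircles, List.mem_cons, List.not_mem_nil, or_false]
    rintro C (rfl | rfl | rfl | rfl | rfl | rfl | rfl) <;> rfl
  refine Finset.injOn_of_surjOn_of_card_le f (t := Finset.univ)
    (fun _ _ => Finset.mem_coe.2 (Finset.mem_univ _)) (fun v _ => ?_) (by simp [hcard C hC])
  obtain ⟨x, hx, rfl⟩ := hf.2 C hC v
  exact ⟨x, hx, rfl⟩

theorem IsSeptoku.perm_comp {f : Fin 37 → Fin 7} (hf : IsSeptoku f) (σ : Equiv.Perm (Fin 7)) :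
    IsSeptoku (σ ∘ f) := by
  refine ⟨fun R hR => σ.injective.comp_injOn (hf.1 R hR), fun C hC v => ?_⟩
  obtain ⟨x, hx, hfx⟩ := hf.2 C hC (σ.symm v)
  exact ⟨x, hx, by simp [hfx]⟩

def septokuGraph : SimpleGraph (Fin 37) where
  Adj a b := a ≠ b ∧ ∃ G ∈ septokuRows ++ septokuCircles, a ∈ G ∧ b ∈ G
  symm := ⟨fun _ _ ⟨hne, G, hG, ha, hb⟩ => ⟨hne.symm, G, hG, hb, ha⟩⟩
  loopless := ⟨fun _ h => h.1 rfl⟩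

instance : DecidableRel septokuGraph.Adj := fun a b =>
  inferInstanceAs (Decidable (a ≠ b ∧ ∃ G ∈ septokuRows ++ septokuCircles, a ∈ G ∧ b ∈ G))

theorem IsSeptoku.apply_ne_of_adj {f : Fin 37 → Fin 7} (hf : IsSeptoku f) {a b : Fin 37}
    (hab : septokuGraph.Adj a b) : f a ≠ f b := by
  obtain ⟨hne, G, hG, ha, hb⟩ := hab
  rcases List.mem_append.1 hG with hG | hG
  · exact fun h => hne (hf.1 G hG ha hb h)
  · exact fun h => hne (hf.injOn_of_mem_circles hG ha hb h)

section Backtracking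

variable (k : ℕ) (nbrs : ℕ → List ℕ) (leaf : List ℕ → Bool)

/-- Checks `leaf` on every colouring of the positions `0, …, i + n - 1` by the colours
`0, …, k - 1` that extends the colouring `c` of `0, …, i - 1` (listed latest position first) and
gives each new position `i'` a colour different from those of the positions in `nbrs i'`. -/
def allProperExtensions : ℕ → ℕ → List ℕ → Bool
  | 0, _, c => leaf c.reverse
  | n + 1, i, c => (List.range k).all fun v =>
      (nbrs i).any (fun j => c.getD (i - 1 - j) k == v) || allProperExtensions n (i + 1) (v :: c)

variable {k nbrs leaf}

theorem getD_reverse_map_range (g : ℕ → ℕ) {i j : ℕ} (d : ℕ) (hj : j < i) :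
    ((List.range i).reverse.map g).getD (i - 1 - j) d = g j := by
  grind

theorem leaf_of_allProperExtensions (g : ℕ → ℕ) (hg : ∀ i, g i < k)
    (hnbrs : ∀ i, ∀ j ∈ nbrs i, j < i ∧ g j ≠ g i) (n i : ℕ)
    (h : allProperExtensions k nbrs leaf n i ((List.range i).reverse.map g) = true) :
    leaf ((List.range (i + n)).map g) = true := by
  induction n generalizing i with
  | zero => simpa [allProperExtensions] using h
  | succ n ih =>
    have hbranch := List.all_eq_true.1 h (g i) (List.mem_range.2 (hg i))
    have hfree : ((nbrs i).any fun j => ((List.range i).reverse.map g).getD (i - 1 - j) k == g i)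
        = false := by
      simp only [List.any_eq_false, beq_iff_eq]
      intro j hj
      rw [getD_reverse_map_range g k (hnbrs i j hj).1]
      exact (hnbrs i j hj).2
    rw [hfree, Bool.false_or] at hbranch
    rw [show i + (n + 1) = i + 1 + n by omega]
    exact ih (i + 1) (by simpa [List.range_succ] using hbranch)

end Backtracking

namespace Septoku

/-- The order in which the search fills the cells. The first seven form the circle around
cell 6. -/
def fillOrder : List ℕ :=
  [1, 2, 5, 6, 7, 11, 12, 3, 13, 14, 4, 8, 9, 15, 10, 18, 20, 25, 26, 19, 24, 31, 27, 28, 23, 29,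
   35, 17, 16, 33, 36, 21, 32, 30, 37, 34, 22]

def fillCell (i : ℕ) : Fin 37 := cell (fillOrder.getD i 0)

def earlierNbrs (i : ℕ) : List ℕ :=
  (List.range i).filter fun j => septokuGraph.Adj (fillCell j) (fillCell i)

/-- The values of `earlierNbrs` written out, so that the search does not recompute adjacency
at every node. -/
def nbrTable : List (List ℕ) :=
  [[], [0], [0, 1], [0, 1, 2], [0, 1, 2, 3], [0, 1, 2, 3, 4], [0, 1, 2, 3, 4, 5], [0, 1, 4, 6],
   [1, 4, 5, 6, 7], [4, 5, 6, 7, 8], [0, 1, 4, 7, 8, 9], [2, 3, 4, 7, 8, 9, 10],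
   [2, 3, 4, 7, 8, 9, 10, 11], [5, 6, 8, 9, 10, 12], [0, 2, 5, 6, 8, 9, 13],
   [2, 4, 5, 6, 7, 8, 14], [1, 4, 6, 8, 9, 12, 13, 15], [2, 5, 6, 8, 10, 11, 15, 16],
   [0, 3, 6, 8, 9, 12, 15, 16, 17], [0, 3, 6, 8, 10, 11, 15, 16, 17, 18],
   [4, 5, 6, 7, 14, 15, 17, 18], [2, 5, 9, 12, 15, 16, 17, 18, 20],
   [1, 4, 8, 9, 13, 16, 17, 18, 20, 21], [7, 9, 11, 13, 16, 17, 18, 20, 22],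
   [1, 3, 5, 14, 15, 17, 18, 20, 22, 23], [4, 6, 7, 15, 17, 20, 21, 24],
   [9, 12, 14, 16, 17, 18, 20, 21, 25], [1, 3, 5, 14, 15, 16, 19, 20, 24, 26],
   [0, 2, 5, 14, 15, 16, 19, 20, 24, 25, 27], [1, 4, 8, 16, 18, 21, 22, 23, 25],
   [2, 5, 13, 15, 17, 18, 21, 22, 26, 29], [7, 9, 11, 13, 15, 16, 19, 22, 23, 27, 28, 30],
   [0, 3, 6, 13, 18, 19, 21, 22, 25, 29, 30, 31],
   [8, 10, 11, 14, 17, 19, 20, 21, 25, 26, 27, 29, 32],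
   [0, 3, 6, 18, 19, 21, 22, 23, 26, 29, 30, 32],
   [8, 10, 11, 17, 19, 20, 21, 24, 25, 26, 28, 30, 33, 34],
   [9, 10, 12, 13, 15, 16, 19, 22, 23, 27, 28, 29, 31, 34]]

theorem map_earlierNbrs_range : (List.range 37).map earlierNbrs = nbrTable := by
  decide +kernel

theorem adj_of_mem_nbrTable {i j : ℕ} (h : j ∈ nbrTable.getD i []) :
    j < i ∧ septokuGraph.Adj (fillCell j) (fillCell i) := by
  by_cases hi : i < 37
  · rw [← map_earlierNbrs_range, List.getD_eq_getElem?_getD, List.getElem?_map,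
      List.getElem?_range hi] at h
    simpa [earlierNbrs] using h
  · rw [List.getD_eq_default _ _ (by rw [show nbrTable.length = 37 from rfl]; omega)] at h
    simp at h

def corners : List ℕ := [1, 4, 16, 22, 34, 37, 19]

theorem idxOf_corner_lt_and_fillCell : ∀ n ∈ corners,
    fillOrder.idxOf n < 37 ∧ fillCell (fillOrder.idxOf n) = cell n := by
  decide +kernel

def cornersDistinct (c : List ℕ) : Bool :=
  (corners.map fun n => c.getD (fillOrder.idxOf n) 0).Pairwise (· ≠ ·)

theorem allProperExtensions_cornersDistinct :
    allProperExtensions 7 (nbrTable.getD · []) cornersDistinct 30 7 (List.range 7).reverse := by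
  decide +kernel

theorem exists_perm_apply_fillCell {f : Fin 37 → Fin 7} (hf : IsSeptoku f) :
    ∃ σ : Equiv.Perm (Fin 7), ∀ j : Fin 7, σ (f (fillCell j)) = j := by
  have hclique : ∀ a b : Fin 7, a ≠ b → septokuGraph.Adj (fillCell a) (fillCell b) := by
    decide +kernel
  have hinj : Function.Injective fun j : Fin 7 => f (fillCell j) := fun a b hab =>
    by_contra fun hne => hf.apply_ne_of_adj (hclique a b hne) hab
  exact ⟨(Equiv.ofBijective _ (Finite.injective_iff_bijective.1 hinj)).symm,
    Equiv.ofBijective_symm_apply_apply _ _⟩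

theorem pairwise_ne_corners {f : Fin 37 → Fin 7} (hf : IsSeptoku f)
    (hnorm : ∀ j : Fin 7, f (fillCell j) = j) :
    (corners.map fun n => f (cell n)).Pairwise (· ≠ ·) := by
  let g (i : ℕ) : ℕ := f (fillCell i)
  have hinit : (List.range 7).map g = List.range 7 :=
    (List.map_congr_left (g := id) fun i hi => congrArg Fin.val (hnorm ⟨i, List.mem_range.1 hi⟩)).trans
      (List.map_id _)
  have hnbrs (i : ℕ) : ∀ j ∈ nbrTable.getD i [], j < i ∧ g j ≠ g i := fun j hj =>
    ⟨(adj_of_mem_nbrTable hj).1, fun h => hf.apply_ne_of_adj (adj_of_mem_nbrTable hj).2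
      (Fin.val_injective h)⟩
  have hsearch := leaf_of_allProperExtensions g (fun i => (f _).isLt) hnbrs 30 7
    (by rw [List.map_reverse, hinit]; exact allProperExtensions_cornersDistinct)
  have hcorner : ∀ n ∈ corners,
      ((List.range 37).map g).getD (fillOrder.idxOf n) 0 = f (cell n) := fun n hn => by
    obtain ⟨hlt, hcell⟩ := idxOf_corner_lt_and_fillCell n hn
    simp [List.getD_eq_getElem?_getD, hlt, g, hcell]
  simp only [cornersDistinct, decide_eq_true_eq, List.map_congr_left hcorner,
    List.pairwise_map] at hsearch
  rw [List.pairwise_map]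
  exact hsearch.imp fun h e => h (by rw [e])

end Septoku

/-- In every valid Septoku board, the values of the six corner cells 1, 4, 16, 22, 34, 37
together with the central cell 19 are pairwise distinct. -/
theorem septoku_corners_center_distinct (f : Fin 37 → Fin 7) (hf : IsSeptoku f) :
    (([1, 4, 16, 22, 34, 37, 19] : List ℕ).map (fun n => f (cell n))).Pairwise (· ≠ ·) := by
  obtain ⟨σ, hσ⟩ := Septoku.exists_perm_apply_fillCell hf
  have hnormal := Septoku.pairwise_ne_corners (hf.perm_comp σ) hσ
  rw [List.pairwise_map] at hnormal ⊢
  exact hnormal.imp fun h e => h (congrArg σ e)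
end

section
/- In every valid Septoku board, the multiset of occurrence counts of the seven symbols is either {7,5,5,5,5,5,5} (six symbols appear 5 times and one symbol appears 7 times) or {6,6,5,5,5,5,5} (five symbols appear 5 times and two symbols appear 6 times). -/
/-- Bit table: bit `7*x+i` is set iff cell `x` (0-based) lies in circle `i`. -/
def septCoverT : ℕ :=
  466801106681465631596710385237849807573577652299052595800891294858351164293249

/-- Bit table: bit `37*x+y` is set iff `x ≠ y` and cells `x,y` (0-based) share a row. -/
def septPairT : ℕ :=
  6256828700545500188650551707768318952079131017799598782018023491986973301287773210118913869282226801958723058678881871281547129991074508134360126301076503615401869131921175561277332038025976781288801469951131029416051148744008068140496814717523121928980960101799572986991534892892237236547131188227590289966450439043357820952602279191006550577848045053670050601380410223585006023681201217741094806357439999674942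

def septInC (i : ℕ) (x : Fin 37) : Bool := septCoverT.testBit (7 * x.val + i)

def septBad (x y : Fin 37) : Bool := septPairT.testBit (37 * x.val + y.val)

lemma septBad_sound : ∀ x y : Fin 37, septBad x y = true →
    x ≠ y ∧ ∃ R ∈ septokuRows, x ∈ R ∧ y ∈ R := by decide

lemma septInC0_sound : ∀ x : Fin 37, x ∈ cells [1,2,5,6,7,11,12] → septInC 0 x = true := by
  decide
lemma septInC1_sound : ∀ x : Fin 37, x ∈ cells [3,4,7,8,9,13,14] → septInC 1 x = true := by
  decide
lemma septInC2_sound : ∀ x : Fin 37, x ∈ cells [10,11,16,17,18,23,24] → septInC 2 x = true := by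
  decide
lemma septInC3_sound : ∀ x : Fin 37, x ∈ cells [12,13,18,19,20,25,26] → septInC 3 x = true := by
  decide
lemma septInC4_sound : ∀ x : Fin 37, x ∈ cells [14,15,20,21,22,27,28] → septInC 4 x = true := by
  decide
lemma septInC5_sound : ∀ x : Fin 37, x ∈ cells [24,25,29,30,31,34,35] → septInC 5 x = true := by
  decide
lemma septInC6_sound : ∀ x : Fin 37, x ∈ cells [26,27,31,32,33,36,37] → septInC 6 x = true := by
  decide

/-- The circles centered at 6 and 21 are disjoint. -/
lemma septDisjAE : ∀ x : Fin 37,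
    x ∈ cells [1,2,5,6,7,11,12] → x ∈ cells [14,15,20,21,22,27,28] → False := by decide
/-- The circles centered at 6 and 30 are disjoint. -/
lemma septDisjAF : ∀ x : Fin 37,
    x ∈ cells [1,2,5,6,7,11,12] → x ∈ cells [24,25,29,30,31,34,35] → False := by decide
/-- The circles centered at 21 and 30 are disjoint. -/
lemma septDisjEF : ∀ x : Fin 37,
    x ∈ cells [14,15,20,21,22,27,28] → x ∈ cells [24,25,29,30,31,34,35] → False := by decide

/-- Core combinatorial fact: four cells, one in the circle centered at 6, one in the
circle centered at 21, one in the circle centered at 30, which together cover all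
seven circles, must contain a pair of distinct cells sharing a row. -/
lemma septKey : ∀ a : Fin 37, septInC 0 a = true → ∀ b : Fin 37, septInC 4 b = true →
    ∀ c : Fin 37, septInC 5 c = true → ∀ d : Fin 37,
    (septInC 1 a || septInC 1 b || septInC 1 c || septInC 1 d) = true →
    (septInC 2 a || septInC 2 b || septInC 2 c || septInC 2 d) = true →
    (septInC 3 a || septInC 3 b || septInC 3 c || septInC 3 d) = true →
    (septInC 6 a || septInC 6 b || septInC 6 c || septInC 6 d) = true →
    (septBad a b || septBad a c || septBad a d || septBad b c || septBad b d ||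
      septBad c d) = true := by decide

lemma septMultisetCases : ∀ a b c d e f g : Fin 3,
    (a : ℕ) + b + c + d + e + f + g = 2 →
    ({5 + (a : ℕ), 5 + (b : ℕ), 5 + (c : ℕ), 5 + (d : ℕ), 5 + (e : ℕ), 5 + (f : ℕ),
        5 + (g : ℕ)} : Multiset ℕ) = ({7, 5, 5, 5, 5, 5, 5} : Multiset ℕ) ∨
    ({5 + (a : ℕ), 5 + (b : ℕ), 5 + (c : ℕ), 5 + (d : ℕ), 5 + (e : ℕ), 5 + (f : ℕ),
        5 + (g : ℕ)} : Multiset ℕ) = ({6, 6, 5, 5, 5, 5, 5} : Multiset ℕ) := by decide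

/-- Every symbol occurs at least 5 times in a valid Septoku board. -/
lemma septLower (f : Fin 37 → Fin 7) (hf : IsSeptoku f) (v : Fin 7) :
    5 ≤ (Finset.univ.filter (fun x => f x = v)).card := by
  by_contra h
  push_neg at h
  set S : Finset (Fin 37) := Finset.univ.filter (fun x => f x = v) with hSdef
  have hS4 : S.card ≤ 4 := by omega
  have hmemS : ∀ x : Fin 37, f x = v → x ∈ S := fun x hx =>
    Finset.mem_filter.mpr ⟨Finset.mem_univ x, hx⟩
  have hval : ∀ x ∈ S, f x = v := fun x hx => (Finset.mem_filter.mp hx).2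
  obtain ⟨a, haC, hfa⟩ := hf.2 (cells [1,2,5,6,7,11,12]) (by simp [septokuCircles]) v
  obtain ⟨b, hbC, hfb⟩ := hf.2 (cells [14,15,20,21,22,27,28]) (by simp [septokuCircles]) v
  obtain ⟨c, hcC, hfc⟩ := hf.2 (cells [24,25,29,30,31,34,35]) (by simp [septokuCircles]) v
  have haS : a ∈ S := hmemS a hfa
  have hbS : b ∈ S := hmemS b hfb
  have hcS : c ∈ S := hmemS c hfc
  have hab : a ≠ b := fun h => septDisjAE b (h ▸ haC) hbC
  have hac : a ≠ c := fun h => septDisjAF c (h ▸ haC) hcC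
  have hbc : b ≠ c := fun h => septDisjEF c (h ▸ hbC) hcC
  have hsubset : ({a, b, c} : Finset (Fin 37)) ⊆ S := by
    simp [Finset.insert_subset_iff, haS, hbS, hcS]
  have hcard3 : ({a, b, c} : Finset (Fin 37)).card = 3 := by
    rw [Finset.card_insert_of_notMem (by simp [hab, hac]),
      Finset.card_insert_of_notMem (by simp [hbc]), Finset.card_singleton]
  have hsd : (S \ ({a, b, c} : Finset (Fin 37))).card ≤ 1 := by
    rw [Finset.card_sdiff_of_subset hsubset, hcard3]; omega
  obtain ⟨d, hdS, hcover⟩ :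
      ∃ d, d ∈ S ∧ ∀ x ∈ S, x = a ∨ x = b ∨ x = c ∨ x = d := by
    rcases Finset.eq_empty_or_nonempty (S \ ({a, b, c} : Finset (Fin 37))) with he | ⟨d, hd⟩
    · refine ⟨a, haS, fun x hx => ?_⟩
      have hx3 : x ∈ ({a, b, c} : Finset (Fin 37)) := by
        by_contra hx'
        exact absurd (Finset.mem_sdiff.mpr ⟨hx, hx'⟩) (by simp [he])
      simp only [Finset.mem_insert, Finset.mem_singleton] at hx3
      tauto
    · refine ⟨d, (Finset.mem_sdiff.mp hd).1, fun x hx => ?_⟩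
      by_cases hx' : x ∈ ({a, b, c} : Finset (Fin 37))
      · simp only [Finset.mem_insert, Finset.mem_singleton] at hx'
        tauto
      · exact Or.inr (Or.inr (Or.inr
          (Finset.card_le_one.mp hsd x (Finset.mem_sdiff.mpr ⟨hx, hx'⟩) d hd)))
  have hdv : f d = v := hval d hdS
  have hcov : ∀ (i : ℕ) (L : List ℕ),
      (∀ x : Fin 37, x ∈ cells L → septInC i x = true) → cells L ∈ septokuCircles →
      (septInC i a || septInC i b || septInC i c || septInC i d) = true := by
    intro i L hsound hmem
    obtain ⟨x, hxC, hfx⟩ := hf.2 _ hmem v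
    rcases hcover x (hmemS x hfx) with rfl | rfl | rfl | rfl <;>
      simp [hsound _ hxC]
  have h1 := hcov 1 _ septInC1_sound (by simp [septokuCircles])
  have h2 := hcov 2 _ septInC2_sound (by simp [septokuCircles])
  have h3 := hcov 3 _ septInC3_sound (by simp [septokuCircles])
  have h6 := hcov 6 _ septInC6_sound (by simp [septokuCircles])
  have hkey := septKey a (septInC0_sound a haC) b (septInC4_sound b hbC)
    c (septInC5_sound c hcC) d h1 h2 h3 h6
  have contra : ∀ x y : Fin 37, septBad x y = true → x ∈ S → y ∈ S → False := by
    intro x y hb hx hy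
    obtain ⟨hne, R, hR, hxR, hyR⟩ := septBad_sound x y hb
    exact hne (hf.1 R hR (Finset.mem_coe.mpr hxR) (Finset.mem_coe.mpr hyR)
      ((hval x hx).trans (hval y hy).symm))
  simp only [Bool.or_eq_true] at hkey
  rcases hkey with ((((h | h) | h) | h) | h) | h <;>
    exact contra _ _ h (by assumption) (by assumption)

/-- In every valid Septoku board, the multiset of occurrence counts of the seven symbols is
either {7,5,5,5,5,5,5} or {6,6,5,5,5,5,5}. -/
theorem septoku_count_multiset (f : Fin 37 → Fin 7) (hf : IsSeptoku f) :
    (Finset.univ : Finset (Fin 7)).val.map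
        (fun v => (Finset.univ.filter (fun x => f x = v)).card) =
      ({7, 5, 5, 5, 5, 5, 5} : Multiset ℕ) ∨
    (Finset.univ : Finset (Fin 7)).val.map
        (fun v => (Finset.univ.filter (fun x => f x = v)).card) =
      ({6, 6, 5, 5, 5, 5, 5} : Multiset ℕ) := by
  set g : Fin 7 → ℕ := fun v => (Finset.univ.filter (fun x => f x = v)).card with hg
  have l0 : 5 ≤ g 0 := septLower f hf 0
  have l1 : 5 ≤ g 1 := septLower f hf 1
  have l2 : 5 ≤ g 2 := septLower f hf 2
  have l3 : 5 ≤ g 3 := septLower f hf 3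
  have l4 : 5 ≤ g 4 := septLower f hf 4
  have l5 : 5 ≤ g 5 := septLower f hf 5
  have l6 : 5 ≤ g 6 := septLower f hf 6
  have hsum : g 0 + g 1 + g 2 + g 3 + g 4 + g 5 + g 6 = 37 := by
    have h := Finset.card_eq_sum_card_fiberwise
      (s := (Finset.univ : Finset (Fin 37))) (t := (Finset.univ : Finset (Fin 7)))
      (f := f) (fun x _ => Finset.mem_univ (f x))
    rw [Finset.card_univ, Fintype.card_fin, Fin.sum_univ_seven] at h
    exact h.symm
  have key := septMultisetCases ⟨g 0 - 5, by omega⟩ ⟨g 1 - 5, by omega⟩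
    ⟨g 2 - 5, by omega⟩ ⟨g 3 - 5, by omega⟩ ⟨g 4 - 5, by omega⟩
    ⟨g 5 - 5, by omega⟩ ⟨g 6 - 5, by omega⟩
    (show g 0 - 5 + (g 1 - 5) + (g 2 - 5) + (g 3 - 5) + (g 4 - 5) + (g 5 - 5) +
      (g 6 - 5) = 2 by omega)
  have key' : ({g 0, g 1, g 2, g 3, g 4, g 5, g 6} : Multiset ℕ) =
      ({7, 5, 5, 5, 5, 5, 5} : Multiset ℕ) ∨
      ({g 0, g 1, g 2, g 3, g 4, g 5, g 6} : Multiset ℕ) =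
      ({6, 6, 5, 5, 5, 5, 5} : Multiset ℕ) := by
    have e0 : g 0 = 5 + (g 0 - 5) := by omega
    have e1 : g 1 = 5 + (g 1 - 5) := by omega
    have e2 : g 2 = 5 + (g 2 - 5) := by omega
    have e3 : g 3 = 5 + (g 3 - 5) := by omega
    have e4 : g 4 = 5 + (g 4 - 5) := by omega
    have e5 : g 5 = 5 + (g 5 - 5) := by omega
    have e6 : g 6 = 5 + (g 6 - 5) := by omega
    rw [e0, e1, e2, e3, e4, e5, e6]
    exact key
  have hmap : (Finset.univ : Finset (Fin 7)).val.map g =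
      ({g 0, g 1, g 2, g 3, g 4, g 5, g 6} : Multiset ℕ) := rfl
  rcases key' with k | k
  · exact Or.inl (hmap.trans k)
  · exact Or.inr (hmap.trans k)
end

section
/- For every valid Septoku board f and every set S of at most five cells, there exists a valid Septoku board g with g ≠ f that agrees with f on every cell of S. (Consequently, no Septoku puzzle with five or fewer seeds has a unique solution.) -/
theorem IsSeptoku.surjective {f : Fin 37 → Fin 7} (hf : IsSeptoku f) : Function.Surjective f :=
  fun v => (hf.2 _ (List.mem_cons_self ..) v).imp fun _ => And.right

theorem Function.Surjective.perm_comp_ne {α β : Type*} {f : α → β} (hf : Function.Surjective f)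
    {σ : Equiv.Perm β} (hσ : σ ≠ 1) : ⇑σ ∘ f ≠ f := by
  intro h
  apply hσ
  ext v
  obtain ⟨x, rfl⟩ := hf v
  exact congrFun h x

theorem Finset.exists_ne_notMem_image {α β : Type*} [DecidableEq β] [Fintype β] (f : α → β)
    (S : Finset α) (hS : S.card + 2 ≤ Fintype.card β) :
    ∃ a b, a ≠ b ∧ a ∉ S.image f ∧ b ∉ S.image f := by
  have hcard : 1 < (S.image f)ᶜ.card := by
    rw [card_compl]
    have := card_image_le (s := S) (f := f)
    omega
  obtain ⟨a, ha, b, hb, hab⟩ := one_lt_card.mp hcard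
  exact ⟨a, b, hab, mem_compl.mp ha, mem_compl.mp hb⟩

/-- For every valid Septoku board `f` and every set `S` of at most five cells, there is a
different valid Septoku board agreeing with `f` on `S`: no puzzle with at most five seeds
has a unique solution. -/
theorem septoku_five_seeds_not_unique (f : Fin 37 → Fin 7) (hf : IsSeptoku f)
    (S : Finset (Fin 37)) (hS : S.card ≤ 5) :
    ∃ g : Fin 37 → Fin 7, IsSeptoku g ∧ g ≠ f ∧ ∀ x ∈ S, g x = f x := by
  obtain ⟨a, b, hab, ha, hb⟩ := S.exists_ne_notMem_image f (by simpa using hS)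
  refine ⟨Equiv.swap a b ∘ f, hf.perm_comp _,
    hf.surjective.perm_comp_ne (Equiv.swap_eq_one_iff.not.mpr hab), fun x hx => ?_⟩
  have hxS := Finset.mem_image_of_mem f hx
  exact Equiv.swap_apply_of_ne_of_ne (fun h => ha (h ▸ hxS)) (fun h => hb (h ▸ hxS))
end

section
/- In every valid Septoku board f, the value f(19) of the central cell occurs an odd number of times on the board; in fact it occurs exactly 5 or exactly 7 times. -/
/-! Every circle has seven cells and all seven symbols, so it carries each symbol exactly once.
Hence the cells of value `f 19` are one chosen cell per circle, cell 19 for the central one, no two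
of them in a common row. Two circles can only choose the same cell if it is one of the six cells
shared by neighbouring outer circles, and an exhaustive search shows that this happens for none or
exactly two of them, leaving 7 or 5 distinct cells. -/

open Finset

def SharesRow (a b : Fin 37) : Prop := ∃ R ∈ septokuRows, a ∈ R ∧ b ∈ R

instance : DecidableRel SharesRow := fun _ _ =>
  inferInstanceAs (Decidable (∃ R ∈ septokuRows, _))

def septokuCircle (i : Fin 7) : Finset (Fin 37) := septokuCircles.get (i.cast rfl)

theorem septokuCircle_mem (i : Fin 7) : septokuCircle i ∈ septokuCircles := List.get_mem _ _

theorem exists_mem_septokuCircle : ∀ x : Fin 37, ∃ i, x ∈ septokuCircle i := by decide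

namespace IsSeptoku

variable {f : Fin 37 → Fin 7}

theorem eq_of_sharesRow (hf : IsSeptoku f) {a b : Fin 37} (hab : SharesRow a b)
    (hfab : f a = f b) : a = b := by
  obtain ⟨R, hR, ha, hb⟩ := hab
  exact hf.1 R hR ha hb hfab

theorem injOn_septokuCircle (hf : IsSeptoku f) (i : Fin 7) : Set.InjOn f (septokuCircle i) := by
  refine Finset.injOn_of_surjOn_of_card_le f (t := univ) (fun _ _ => mem_coe.2 (mem_univ _))
    (fun v _ => ?_) (by revert i; decide)
  obtain ⟨x, hx, rfl⟩ := hf.2 _ (septokuCircle_mem i) v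
  exact ⟨x, hx, rfl⟩

end IsSeptoku

structure IsIndependentTransversal (r : Fin 7 → Fin 37) : Prop where
  mem : ∀ i, r i ∈ septokuCircle i
  eq_of_sharesRow : ∀ i j, SharesRow (r i) (r j) → r i = r j

set_option maxRecDepth 10000 in
set_option synthInstance.maxSize 10000 in
theorem IsIndependentTransversal.card_image_eq_five_or_seven {r : Fin 7 → Fin 37}
    (hr : IsIndependentTransversal r) (hcenter : r 3 = cell 19) :
    #(univ.image r) = 5 ∨ #(univ.image r) = 7 := by
  -- Stated with one hypothesis per pair, in search order, so that `decide` abandons a partial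
  -- choice as soon as two of its cells share a row.
  have search : ∀ c3 ∈ septokuCircle 3, c3 = cell 19 →
      ∀ c0 ∈ septokuCircle 0, (SharesRow c0 c3 → c0 = c3) →
      ∀ c1 ∈ septokuCircle 1, (SharesRow c1 c3 → c1 = c3) → (SharesRow c1 c0 → c1 = c0) →
      ∀ c2 ∈ septokuCircle 2, (SharesRow c2 c3 → c2 = c3) → (SharesRow c2 c0 → c2 = c0) →
        (SharesRow c2 c1 → c2 = c1) →
      ∀ c4 ∈ septokuCircle 4, (SharesRow c4 c3 → c4 = c3) → (SharesRow c4 c0 → c4 = c0) →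
        (SharesRow c4 c1 → c4 = c1) → (SharesRow c4 c2 → c4 = c2) →
      ∀ c5 ∈ septokuCircle 5, (SharesRow c5 c3 → c5 = c3) → (SharesRow c5 c0 → c5 = c0) →
        (SharesRow c5 c1 → c5 = c1) → (SharesRow c5 c2 → c5 = c2) → (SharesRow c5 c4 → c5 = c4) →
      ∀ c6 ∈ septokuCircle 6, (SharesRow c6 c3 → c6 = c3) → (SharesRow c6 c0 → c6 = c0) →
        (SharesRow c6 c1 → c6 = c1) → (SharesRow c6 c2 → c6 = c2) → (SharesRow c6 c4 → c6 = c4) →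
        (SharesRow c6 c5 → c6 = c5) →
      #({c0, c1, c2, c3, c4, c5, c6} : Finset (Fin 37)) = 5 ∨
        #({c0, c1, c2, c3, c4, c5, c6} : Finset (Fin 37)) = 7 := by
    decide
  have himage : univ.image r = {r 0, r 1, r 2, r 3, r 4, r 5, r 6} := by
    ext x
    simp [Fin.exists_fin_succ, eq_comm]
  obtain ⟨hm, hs⟩ := hr
  rw [himage]
  exact search _ (hm 3) hcenter _ (hm 0) (hs 0 3) _ (hm 1) (hs 1 3) (hs 1 0)
    _ (hm 2) (hs 2 3) (hs 2 0) (hs 2 1) _ (hm 4) (hs 4 3) (hs 4 0) (hs 4 1) (hs 4 2)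
    _ (hm 5) (hs 5 3) (hs 5 0) (hs 5 1) (hs 5 2) (hs 5 4)
    _ (hm 6) (hs 6 3) (hs 6 0) (hs 6 1) (hs 6 2) (hs 6 4) (hs 6 5)

theorem IsSeptoku.card_filter_eq_five_or_seven {f : Fin 37 → Fin 7} (hf : IsSeptoku f) :
    #(univ.filter (fun x => f x = f (cell 19))) = 5 ∨
      #(univ.filter (fun x => f x = f (cell 19))) = 7 := by
  choose r hr hfr using fun i => hf.2 (septokuCircle i) (septokuCircle_mem i) (f (cell 19))
  have hS : univ.filter (fun x => f x = f (cell 19)) = univ.image r := by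
    ext x
    simp only [mem_filter, mem_univ, true_and, mem_image]
    refine ⟨fun hx => ?_, fun ⟨i, hi⟩ => hi ▸ hfr i⟩
    obtain ⟨i, hi⟩ := exists_mem_septokuCircle x
    exact ⟨i, hf.injOn_septokuCircle i (hr i) hi ((hfr i).trans hx.symm)⟩
  rw [hS]
  refine IsIndependentTransversal.card_image_eq_five_or_seven ⟨hr, fun i j hij => ?_⟩ ?_
  · exact hf.eq_of_sharesRow hij ((hfr i).trans (hfr j).symm)
  · exact hf.injOn_septokuCircle 3 (hr 3) (by decide) (hfr 3)

/-- In every valid Septoku board, the value of the central cell 19 occurs an odd number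
of times; in fact it occurs exactly 5 or exactly 7 times. -/
theorem septoku_center_value_count (f : Fin 37 → Fin 7) (hf : IsSeptoku f) :
    Odd (Finset.univ.filter (fun x => f x = f (cell 19))).card ∧
    ((Finset.univ.filter (fun x => f x = f (cell 19))).card = 5 ∨
      (Finset.univ.filter (fun x => f x = f (cell 19))).card = 7) := by
  have hcount := hf.card_filter_eq_five_or_seven
  refine ⟨?_, hcount⟩
  rcases hcount with h | h <;> rw [h] <;> decide
end

section
/- Let S be a set of exactly six cells and let f be a valid Septoku board such that f is the unique valid Septoku board agreeing with f on every cell of S. Then f takes six pairwise distinct values on the cells of S (i.e., the six seeds must use six different symbols). -/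
/-!
If the seeds of a solved puzzle `f` used at most five symbols, two symbols `a ≠ b` would be
missing from them. Relabelling `a ↔ b` preserves validity and the seeds, and changes `f`
because every symbol occurs on a valid board; so the solution would not be unique.
-/

theorem Finset.one_lt_card_compl_image_of_not_injOn {α β : Type*} [DecidableEq β] [Fintype β]
    {f : α → β} {s : Finset α} (hs : s.card < Fintype.card β) (hf : ¬ Set.InjOn f s) :
    1 < (s.image f)ᶜ.card := by
  have hlt : (s.image f).card < s.card :=
    lt_of_le_of_ne Finset.card_image_le fun h => hf (Finset.card_image_iff.mp h)
  rw [Finset.card_compl]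
  omega

namespace IsSeptoku

variable {f : Fin 37 → Fin 7}

theorem comp_equiv (hf : IsSeptoku f) (σ : Fin 7 ≃ Fin 7) : IsSeptoku (σ ∘ f) := by
  refine ⟨fun R hR x hx y hy hxy => hf.1 R hR hx hy (σ.injective hxy), fun C hC v => ?_⟩
  obtain ⟨x, hxC, hx⟩ := hf.2 C hC (σ.symm v)
  exact ⟨x, hxC, by simp [hx]⟩

theorem surjective_s15 (hf : IsSeptoku f) : Function.Surjective f := fun v =>
  let ⟨x, _, hx⟩ := hf.2 _ List.mem_cons_self v
  ⟨x, hx⟩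

end IsSeptoku

/-- If a Septoku puzzle with exactly six seeds has a unique solution, then the six seeds
carry six pairwise distinct symbols. -/
theorem septoku_six_seeds_distinct_values (S : Finset (Fin 37)) (hS : S.card = 6)
    (f : Fin 37 → Fin 7) (hf : IsSeptoku f)
    (huniq : ∀ g : Fin 37 → Fin 7, IsSeptoku g → (∀ x ∈ S, g x = f x) → g = f) :
    Set.InjOn f ↑S := by
  by_contra hInj
  obtain ⟨a, ha, b, hb, hab⟩ := Finset.one_lt_card.mp
    (Finset.one_lt_card_compl_image_of_not_injOn (by simp [hS]) hInj)
  have hfixed : ∀ x ∈ S, (Equiv.swap a b ∘ f) x = f x := fun x hx =>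
    have hfx : f x ∈ S.image f := Finset.mem_image_of_mem f hx
    Equiv.swap_apply_of_ne_of_ne (fun h => Finset.mem_compl.mp ha (h ▸ hfx))
      (fun h => Finset.mem_compl.mp hb (h ▸ hfx))
  have hswap := huniq _ (hf.comp_equiv (Equiv.swap a b)) hfixed
  obtain ⟨x, hxa⟩ := hf.surjective_s15 a
  have hba : b = a := by
    simpa only [Function.comp_apply, hxa, Equiv.swap_apply_left] using congrFun hswap x
  exact hab hba.symm
end
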